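/- Let A be a self-adjoint endomorphism of V with eigenvalues ρ_1,…,ρ_n (listed with multiplicity), and let ρ_(q) denote the minimum of Σ_{i∈S} ρ_i over all q-element subsets S ⊆ {1,…,n} (equivalently, the sum of the q smallest eigenvalues of A). Then for every alternating q-form ω on V one has ⟨𝒜_q ω, ω⟩ ≥ ρ_(q) ‖ω‖², and ρ_(q) is the least eigenvalue of 𝒜_q. -/

import Mathlib

/-! In the eigenbasis `b` each `e_I^*` is an eigenform of `𝒜_q` with eigenvalue `Σ_{i∈I} ρ_i`,
so `⟨𝒜_q ω, ω⟩ = Σ_I (Σ_{i∈I} ρ_i) ω_I² ≥ ρ_(q) ‖ω‖²`. Equality holds for `ω = e_S^*` with `S`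
a minimising subset, and since `‖ω‖² > 0` for `ω ≠ 0`, the inequality applied to an eigenform
bounds its eigenvalue below by `ρ_(q)`. -/

open scoped RealInnerProductSpace Classical

/-- The operator `𝒜_q` on `q`-forms induced by an endomorphism `A` of `V`:
`(𝒜_q ω)(v_1,…,v_q) = Σ_j ω(v_1,…,A v_j,…,v_q)`. -/
noncomputable def indA {q : ℕ} {V : Type*} [AddCommGroup V] [Module ℝ V]
    (A : V →ₗ[ℝ] V) (ω : (Fin q → V) → ℝ) : (Fin q → V) → ℝ :=
  fun v => ∑ j : Fin q, ω (Function.update v j (A (v j)))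

/-- The inner product of `q`-forms: `⟨ω,τ⟩ = Σ_I ω_I τ_I`, the sum running over
increasing multi-indices `I` of length `q`. -/
noncomputable def formInner {n q : ℕ} {V : Type*} [NormedAddCommGroup V] [InnerProductSpace ℝ V]
    (b : OrthonormalBasis (Fin n) ℝ V) (ω τ : (Fin q → V) → ℝ) : ℝ :=
  ∑ I ∈ Finset.univ.filter (fun I : Fin q → Fin n => StrictMono I),
    ω (fun k => b (I k)) * τ (fun k => b (I k))

/-- `ρ_(q)`: the minimum of `Σ_{i∈S} ρ_i` over all `q`-element subsets `S` of the
index set, i.e. the sum of the `q` smallest values of `ρ`. -/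
noncomputable def minSum (n q : ℕ) (ρ : Fin n → ℝ) : ℝ :=
  sInf {x : ℝ | ∃ s : Finset (Fin n), s.card = q ∧ x = ∑ i ∈ s, ρ i}

open Finset

section MinSum

variable {n q : ℕ} (ρ : Fin n → ℝ)

lemma minSum_set_finite :
    {x : ℝ | ∃ s : Finset (Fin n), s.card = q ∧ x = ∑ i ∈ s, ρ i}.Finite :=
  (Set.finite_range fun s : Finset (Fin n) => ∑ i ∈ s, ρ i).subset
    fun _ ⟨s, _, hx⟩ => ⟨s, hx.symm⟩

lemma minSum_le_sum {s : Finset (Fin n)} (hs : #s = q) : minSum n q ρ ≤ ∑ i ∈ s, ρ i :=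
  csInf_le (minSum_set_finite ρ).bddBelow ⟨s, hs, rfl⟩

lemma minSum_le_sum_comp {J : Fin q → Fin n} (hJ : J.Injective) :
    minSum n q ρ ≤ ∑ j, ρ (J j) := by
  simpa [sum_map] using minSum_le_sum ρ (s := univ.map ⟨J, hJ⟩) (by simp)

lemma exists_card_eq_minSum_eq_sum (hqn : q ≤ n) :
    ∃ s : Finset (Fin n), #s = q ∧ minSum n q ρ = ∑ i ∈ s, ρ i := by
  obtain ⟨s, -, hs⟩ := exists_subset_card_eq (s := (univ : Finset (Fin n))) (by simpa using hqn)
  have hne : {x : ℝ | ∃ s : Finset (Fin n), #s = q ∧ x = ∑ i ∈ s, ρ i}.Nonempty :=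
    ⟨_, s, hs, rfl⟩
  exact hne.csInf_mem (minSum_set_finite ρ)

end MinSum

lemma AlternatingMap.eq_zero_of_forall_strictMono {R M N ι : Type*} [CommRing R]
    [AddCommGroup M] [Module R M] [AddCommGroup N] [Module R N] [LinearOrder ι] [Finite ι]
    {q : ℕ} (b : Module.Basis ι R M) {ω : M [⋀^Fin q]→ₗ[R] N}
    (h : ∀ I : Fin q → ι, StrictMono I → ω (fun k => b (I k)) = 0) : ω = 0 := by
  refine b.ext_alternating fun v hv => ?_
  set σ := Tuple.sort v
  have hsorted : StrictMono (v ∘ σ) :=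
    (Tuple.monotone_sort v).strictMono_of_injective (hv.comp σ.injective)
  have := ω.map_perm (fun k => b (v k)) σ
  rw [show (fun k => b (v k)) ∘ σ = fun k => b ((v ∘ σ) k) from rfl, h _ hsorted] at this
  simpa using (smul_eq_zero_iff_eq _).mp this.symm

section InducedOperator

variable {q : ℕ} {V : Type*} [AddCommGroup V] [Module ℝ V] (A : V →ₗ[ℝ] V)

noncomputable def indMultilinear (ω : MultilinearMap ℝ (fun _ : Fin q => V) ℝ) :
    MultilinearMap ℝ (fun _ : Fin q => V) ℝ :=
  ∑ j : Fin q, ω.compLinearMap (Function.update (fun _ => LinearMap.id) j A)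

lemma coe_indMultilinear (ω : MultilinearMap ℝ (fun _ : Fin q => V) ℝ) :
    ⇑(indMultilinear A ω) = indA A ⇑ω := by
  funext v
  simp only [indMultilinear, _root_.sum_apply, MultilinearMap.compLinearMap_apply, indA]
  refine sum_congr rfl fun j _ => congrArg ω (funext fun i => ?_)
  rcases eq_or_ne i j with rfl | hij <;> simp [*]

variable {ι : Type*} {ρ : ι → ℝ}

lemma indA_apply_eigenvectors {e : ι → V} (hAe : ∀ i, A (e i) = ρ i • e i)
    (ω : V [⋀^Fin q]→ₗ[ℝ] ℝ) (J : Fin q → ι) :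
    indA A ⇑ω (fun k => e (J k)) = (∑ j, ρ (J j)) * ω (fun k => e (J k)) := by
  simp only [indA, sum_mul]
  refine sum_congr rfl fun j _ => ?_
  rw [hAe, ω.map_update_smul, Function.update_eq_self, smul_eq_mul]

lemma indA_eq_const_mul [Finite ι] (b : Module.Basis ι ℝ V) (hAb : ∀ i, A (b i) = ρ i • b i)
    (ω : V [⋀^Fin q]→ₗ[ℝ] ℝ) (c : ℝ)
    (h : ∀ J : Fin q → ι, ω (fun k => b (J k)) ≠ 0 → ∑ j, ρ (J j) = c) :
    indA A ⇑ω = fun v => c * ω v := by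
  have : indMultilinear A ω.toMultilinearMap = c • ω.toMultilinearMap := by
    refine Module.Basis.ext_multilinear (fun _ => b) fun J => ?_
    change indMultilinear A ω.toMultilinearMap _ = c * ω _
    rw [coe_indMultilinear, AlternatingMap.coe_multilinearMap, indA_apply_eigenvectors A hAb]
    by_cases hJ : ω (fun k => b (J k)) = 0
    · simp [hJ]
    · rw [h J hJ]
  rw [← AlternatingMap.coe_multilinearMap, ← coe_indMultilinear, this]
  rfl

end InducedOperator

section CoordDet

variable {R M ι : Type*} [CommRing R] [AddCommGroup M] [Module R M] {q : ℕ}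

/-- The form `e_I^*`: the wedge of the coordinate functionals `b.coord (I k)`. -/
noncomputable def coordDet (b : Module.Basis ι R M) (I : Fin q → ι) : M [⋀^Fin q]→ₗ[R] R :=
  Matrix.detRowAlternating.compLinearMap (LinearMap.pi fun k => b.coord (I k))

lemma coordDet_apply_basis (b : Module.Basis ι R M) (I J : Fin q → ι) :
    coordDet b I (fun k => b (J k)) = (Matrix.of fun j k => if J j = I k then 1 else 0).det := by
  change (Matrix.of fun j k => b.coord (I k) (b (J j))).det = _
  congr 1
  ext j k
  simp [Finsupp.single_apply]

lemma coordDet_apply_self [Nontrivial R] (b : Module.Basis ι R M) {I : Fin q → ι}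
    (hI : I.Injective) : coordDet b I (fun k => b (I k)) = 1 := by
  have hid : (Matrix.of fun j k => if I j = I k then (1 : R) else 0) = 1 := by
    ext j k
    simp [Matrix.one_apply, hI.eq_iff]
  rw [coordDet_apply_basis, hid, Matrix.det_one]

lemma mem_range_of_coordDet_apply_basis_ne_zero (b : Module.Basis ι R M) {I J : Fin q → ι}
    (h : coordDet b I (fun k => b (J k)) ≠ 0) (j : Fin q) : J j ∈ Set.range I := by
  by_contra hj
  refine h ?_
  rw [coordDet_apply_basis]
  exact Matrix.det_eq_zero_of_row_eq_zero j fun k => if_neg fun hk => hj ⟨k, hk.symm⟩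

end CoordDet

lemma indA_coordDet {n q : ℕ} {V : Type*} [AddCommGroup V] [Module ℝ V]
    (b : Module.Basis (Fin n) ℝ V) {A : V →ₗ[ℝ] V} {ρ : Fin n → ℝ}
    (hAb : ∀ i, A (b i) = ρ i • b i) {s : Finset (Fin n)} (hs : #s = q) :
    indA A ⇑(coordDet b (s.orderEmbOfFin hs)) =
      fun v => (∑ i ∈ s, ρ i) * coordDet b (s.orderEmbOfFin hs) v := by
  refine indA_eq_const_mul A b hAb _ _ fun J hJ => ?_
  have hJinj : J.Injective := fun j k hjk => by
    by_contra hne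
    exact hJ ((coordDet b _).map_eq_zero_of_eq _ (congrArg b hjk) hne)
  have himage : univ.map ⟨J, hJinj⟩ = s := by
    refine eq_of_subset_of_card_le (fun i hi => ?_) (by simp [hs])
    obtain ⟨j, -, rfl⟩ := mem_map.mp hi
    simpa using mem_range_of_coordDet_apply_basis_ne_zero b hJ j
  rw [← himage, sum_map]
  rfl

section FormInner

variable {n q : ℕ} {V : Type*} [NormedAddCommGroup V] [InnerProductSpace ℝ V]
  (b : OrthonormalBasis (Fin n) ℝ V)

lemma formInner_const_mul_left (μ : ℝ) (ω τ : (Fin q → V) → ℝ) :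
    formInner b (fun v => μ * ω v) τ = μ * formInner b ω τ := by
  simp only [formInner, mul_sum, mul_assoc]

lemma formInner_self_pos {ω : V [⋀^Fin q]→ₗ[ℝ] ℝ} (hω : ω ≠ 0) : 0 < formInner b ⇑ω ⇑ω := by
  obtain ⟨I, hI, hne⟩ : ∃ I : Fin q → Fin n, StrictMono I ∧ ω (fun k => b (I k)) ≠ 0 := by
    by_contra! h
    exact hω (AlternatingMap.eq_zero_of_forall_strictMono b.toBasis (by simpa using h))
  exact sum_pos' (fun _ _ => mul_self_nonneg _) ⟨I, by simpa using hI, mul_self_pos.mpr hne⟩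

lemma minSum_mul_formInner_le {A : V →ₗ[ℝ] V} {ρ : Fin n → ℝ} (hAb : ∀ i, A (b i) = ρ i • b i)
    (ω : V [⋀^Fin q]→ₗ[ℝ] ℝ) :
    minSum n q ρ * formInner b ⇑ω ⇑ω ≤ formInner b (indA A ⇑ω) ⇑ω := by
  rw [formInner, formInner, mul_sum]
  refine sum_le_sum fun I hI => ?_
  rw [indA_apply_eigenvectors A hAb, mul_assoc]
  exact mul_le_mul_of_nonneg_right
    (minSum_le_sum_comp ρ (mem_filter.mp hI).2.injective) (mul_self_nonneg _)

end FormInner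

theorem stmt1_general {n q : ℕ} (hqn : q ≤ n)
    {V : Type*} [NormedAddCommGroup V] [InnerProductSpace ℝ V]
    (b : OrthonormalBasis (Fin n) ℝ V)
    (A : V →ₗ[ℝ] V)
    (ρ : Fin n → ℝ) (hAb : ∀ i, A (b i) = ρ i • b i) :
    -- `⟨𝒜_q ω, ω⟩ ≥ ρ_(q) ‖ω‖²` for every alternating `q`-form `ω`
    (∀ ω : AlternatingMap ℝ V ℝ (Fin q),
      minSum n q ρ * formInner b ⇑ω ⇑ω ≤ formInner b (indA A ⇑ω) ⇑ω)
    -- `ρ_(q)` is an eigenvalue of `𝒜_q` …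
    ∧ (∃ ω : AlternatingMap ℝ V ℝ (Fin q), ω ≠ 0 ∧
        indA A ⇑ω = fun v => minSum n q ρ * ω v)
    -- … and it is the least one
    ∧ (∀ (μ : ℝ) (ω : AlternatingMap ℝ V ℝ (Fin q)), ω ≠ 0 →
        (indA A ⇑ω = fun v => μ * ω v) → minSum n q ρ ≤ μ) := by
  have hAb' : ∀ i, A (b.toBasis i) = ρ i • b.toBasis i := by simpa using hAb
  refine ⟨minSum_mul_formInner_le b hAb, ?_, fun μ ω hω heq => ?_⟩
  · obtain ⟨s, hs, hmin⟩ := exists_card_eq_minSum_eq_sum ρ hqn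
    refine ⟨coordDet b.toBasis (s.orderEmbOfFin hs), fun h => ?_, hmin ▸ indA_coordDet _ hAb' hs⟩
    simpa [h] using coordDet_apply_self b.toBasis (s.orderEmbOfFin hs).injective
  · have hle := minSum_mul_formInner_le b hAb ω
    rw [heq, formInner_const_mul_left] at hle
    exact le_of_mul_le_mul_right hle (formInner_self_pos b hω)

theorem stmt1 {n q : ℕ} (hq : 1 ≤ q) (hqn : q ≤ n)
    {V : Type*} [NormedAddCommGroup V] [InnerProductSpace ℝ V]
    (b : OrthonormalBasis (Fin n) ℝ V)
    (A : V →ₗ[ℝ] V) (hA : ∀ v w : V, ⟪A v, w⟫ = ⟪v, A w⟫)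
    (ρ : Fin n → ℝ) (hAb : ∀ i, A (b i) = ρ i • b i) :
    -- `⟨𝒜_q ω, ω⟩ ≥ ρ_(q) ‖ω‖²` for every alternating `q`-form `ω`
    (∀ ω : AlternatingMap ℝ V ℝ (Fin q),
      minSum n q ρ * formInner b ⇑ω ⇑ω ≤ formInner b (indA A ⇑ω) ⇑ω)
    -- `ρ_(q)` is an eigenvalue of `𝒜_q` …
    ∧ (∃ ω : AlternatingMap ℝ V ℝ (Fin q), ω ≠ 0 ∧
        indA A ⇑ω = fun v => minSum n q ρ * ω v)
    -- … and it is the least one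
    ∧ (∀ (μ : ℝ) (ω : AlternatingMap ℝ V ℝ (Fin q)), ω ≠ 0 →
        (indA A ⇑ω = fun v => μ * ω v) → minSum n q ρ ≤ μ) :=
  stmt1_general hqn b A ρ hAb
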